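/- arXiv:1412.1404 — 2 statements merged into one kernel-verified Lean document; each statement's English description precedes it below -/
import Mathlib

section
/- Let R be a Noetherian local domain, G a free R-module of finite rank, and M ⊆ G a submodule of rank equal to rk(G) (i.e., M generates G ⊗_R K over the fraction field K). Then M is a free R-module if and only if the ideal I_G(M) is a principal ideal of R. -/
/-!
If `M` has a basis `c`, it is indexed like `b` because `M` has full rank, and every maximal minor
factors as `b.det c * c.det w`; so `I_G(M)` is generated by the single minor `b.det c`.
Conversely, in a local ring a principal ideal is generated by one of any given set of generators
(Nakayama), so `I_G(M) = (b.det v)` for some `v : ι → M`, and `b.det v ≠ 0` by the full-rank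
hypothesis. Then `v` is linearly independent, and by Cramer's rule
`b.det v • x = ∑ j, b.det (update v j x) • v j`, where each coefficient is a minor and hence a
multiple of `b.det v`; cancelling `b.det v` in the torsion-free module `G` shows that `v` spans `M`.
-/

open Module Function

namespace Module.Basis

variable {R G ι : Type*} [CommRing R] [AddCommGroup G] [Module R G] [Fintype ι] [DecidableEq ι]

theorem det_smul_eq_sum_det_update_smul (b : Basis ι R G) (v : ι → G) (x : G) :
    b.det v • x = ∑ j, b.det (update v j x) • v j := by
  apply b.repr.injective
  ext i
  have hcramer := congrFun (Matrix.mulVec_cramer (b.toMatrix v) (b.repr x)) i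
  simp only [Matrix.mulVec, dotProduct, Matrix.cramer_apply, ← toMatrix_update, ← det_apply,
    Pi.smul_apply, smul_eq_mul, toMatrix_apply] at hcramer
  simp [← hcramer, mul_comm, Finsupp.finsetSum_apply]

theorem det_comp_eq_det_comp_mul_det {N : Type*} [AddCommGroup N] [Module R N] (b : Basis ι R G)
    (c : Basis ι R N) (f : N →ₗ[R] G) (w : ι → N) :
    b.det (f ∘ w) = b.det (f ∘ c) * c.det w :=
  congrArg (· w) ((b.det.compLinearMap f).eq_smul_basis_det c)

theorem linearIndependent_of_det_ne_zero [IsDomain R] (b : Basis ι R G) {v : ι → G}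
    (h : b.det v ≠ 0) : LinearIndependent R v := by
  by_contra hv
  exact h (b.det.map_linearDependent v hv)

end Module.Basis

theorem IsLocalRing.exists_mem_and_span_eq_span_singleton {R : Type*} [CommRing R] [IsLocalRing R]
    {S : Set R} (hS : S.Nonempty) (h : (Ideal.span S).IsPrincipal) :
    ∃ s ∈ S, Ideal.span S = Ideal.span {s} := by
  obtain ⟨g, hg⟩ := h
  replace hg : Ideal.span S = Ideal.span {g} := hg
  by_contra! hne
  have hle : Ideal.span S ≤ maximalIdeal R • Ideal.span S := by
    rw [Ideal.span_le]
    intro s hs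
    have hsg : s ∈ Ideal.span {g} := hg ▸ Ideal.subset_span hs
    obtain ⟨t, rfl⟩ := Ideal.mem_span_singleton'.mp hsg
    have ht : t ∈ maximalIdeal R := fun hu =>
      hne _ hs (hg.trans (Ideal.span_singleton_mul_left_unit hu g).symm)
    exact Submodule.smul_mem_smul ht (hg ▸ Ideal.mem_span_singleton_self g)
  have hbot : Ideal.span S = ⊥ := Submodule.eq_bot_of_le_smul_of_le_jacobson_bot _ _
    (hg ▸ Submodule.fg_span_singleton g) hle (maximalIdeal_le_jacobson ⊥)
  obtain ⟨s, hs⟩ := hS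
  refine hne s hs (hbot.trans (Ideal.span_singleton_eq_bot.mpr ?_).symm)
  simpa [hbot] using (Ideal.subset_span hs : s ∈ Ideal.span S)

namespace Submodule

variable {R G ι : Type*} [CommRing R] [AddCommGroup G] [Module R G] [Fintype ι] [DecidableEq ι]

def minorsIdeal (b : Basis ι R G) (M : Submodule R G) : Ideal R :=
  Ideal.span (Set.range fun v : ι → M => b.det (M.subtype ∘ v))

theorem det_mem_minorsIdeal (b : Basis ι R G) (M : Submodule R G) (v : ι → M) :
    b.det (M.subtype ∘ v) ∈ M.minorsIdeal b :=
  Ideal.subset_span ⟨v, rfl⟩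

theorem minorsIdeal_eq_span_singleton (b : Basis ι R G) {M : Submodule R G} (c : Basis ι R M) :
    M.minorsIdeal b = Ideal.span {b.det (M.subtype ∘ c)} := by
  refine le_antisymm ?_ ((Ideal.span_singleton_le_iff_mem _).mpr (M.det_mem_minorsIdeal b c))
  rw [minorsIdeal, Ideal.span_le]
  rintro _ ⟨w, rfl⟩
  exact Ideal.mem_span_singleton'.mpr
    ⟨c.det w, by rw [mul_comm, ← b.det_comp_eq_det_comp_mul_det]⟩

theorem free_of_minorsIdeal_eq_span_singleton [IsDomain R] (b : Basis ι R G) {M : Submodule R G}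
    (hI : M.minorsIdeal b ≠ ⊥) (v : ι → M)
    (h : M.minorsIdeal b = Ideal.span {b.det (M.subtype ∘ v)}) : Module.Free R M := by
  set d := b.det (M.subtype ∘ v)
  have hv : d ≠ 0 := fun hd => hI (by rw [h, hd, Ideal.span_singleton_eq_bot])
  have hli : LinearIndependent R v := (b.linearIndependent_of_det_ne_zero hv).of_comp
  suffices hsp : ⊤ ≤ span R (Set.range v) from Module.Free.of_basis (Basis.mk hli hsp)
  rintro x -
  have hquot : ∀ j, ∃ t, t * d = b.det (M.subtype ∘ update v j x) := fun j => by
    rw [← Ideal.mem_span_singleton', ← h]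
    exact M.det_mem_minorsIdeal b _
  choose t ht using hquot
  have hx : x = ∑ j, t j • v j := by
    have := b.isTorsionFree
    apply M.injective_subtype (smul_right_injective G hv _)
    calc d • M.subtype x
        = ∑ j, b.det (M.subtype ∘ update v j x) • M.subtype (v j) := by
          simp_rw [comp_update]
          exact b.det_smul_eq_sum_det_update_smul _ _
      _ = d • M.subtype (∑ j, t j • v j) := by
          simp only [← ht, map_sum, map_smul, Finset.smul_sum, mul_smul]
          exact Finset.sum_congr rfl fun j _ => smul_comm _ _ _
  rw [hx]
  exact sum_mem fun j _ => smul_mem _ _ (subset_span ⟨j, rfl⟩)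

theorem exists_det_ne_zero [IsDomain R] (b : Basis ι R G) {M : Submodule R G}
    (h : ∀ i, ∃ r : R, r ≠ 0 ∧ r • b i ∈ M) :
    ∃ v : ι → M, b.det (M.subtype ∘ v) ≠ 0 := by
  choose r hr hrM using h
  refine ⟨fun i => ⟨r i • b i, hrM i⟩, ?_⟩
  have hdet : b.det (fun i => r i • b i) = ∏ i, r i := by
    simp [AlternatingMap.map_smul_univ, b.det_self]
  simpa [Function.comp_def, hdet, Finset.prod_ne_zero_iff] using hr

theorem minorsIdeal_ne_bot_of_det_ne_zero [IsDomain R] (b : Basis ι R G) {M : Submodule R G}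
    {v : ι → M} (hv : b.det (M.subtype ∘ v) ≠ 0) : M.minorsIdeal b ≠ ⊥ :=
  fun h => hv <| by simpa [h] using M.det_mem_minorsIdeal b v

omit [DecidableEq ι] in
theorem nonempty_basis_of_linearIndependent [IsDomain R] (b : Basis ι R G) (M : Submodule R G)
    [Module.Free R M] {v : ι → M} (hv : LinearIndependent R v) : Nonempty (Basis ι R M) := by
  have := Module.Finite.of_basis b
  have : Module.Finite R M :=
    Module.rank_lt_aleph0_iff.mp (M.rank_le.trans_lt (Module.rank_lt_aleph0 R G))
  have hrank : finrank R M = Fintype.card ι :=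
    le_antisymm (finrank_eq_card_basis b ▸ M.finrank_le) hv.fintype_card_le_finrank
  exact ⟨(Module.finBasisOfFinrankEq R M hrank).reindex (Fintype.equivFin ι).symm⟩

end Submodule

theorem stmt_0_general
    {R : Type*} [CommRing R] [IsDomain R] [IsLocalRing R]
    {G : Type*} [AddCommGroup G] [Module R G]
    {ι : Type*} [Fintype ι] [DecidableEq ι] (b : Module.Basis ι R G)
    (M : Submodule R G)
    (hfull : ∀ g : G, ∃ r : R, r ≠ 0 ∧ r • g ∈ M) :
    Module.Free R ↥M ↔
      (Ideal.span {d : R | ∃ v : ι → ↥M,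
        d = Matrix.det (Matrix.of fun i j => b.repr (v j : G) i)}).IsPrincipal := by
  have hI : Ideal.span {d : R | ∃ v : ι → ↥M,
      d = Matrix.det (Matrix.of fun i j => b.repr (v j : G) i)} = M.minorsIdeal b := by
    simp only [Submodule.minorsIdeal, Set.range, eq_comm, b.det_apply]
    rfl
  obtain ⟨v₀, hv₀⟩ := M.exists_det_ne_zero b fun i => hfull (b i)
  rw [hI]
  constructor
  · intro _
    obtain ⟨c⟩ := M.nonempty_basis_of_linearIndependent b
      (b.linearIndependent_of_det_ne_zero hv₀).of_comp
    exact ⟨_, M.minorsIdeal_eq_span_singleton b c⟩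
  · intro h
    obtain ⟨_, ⟨v, rfl⟩, hv⟩ :=
      IsLocalRing.exists_mem_and_span_eq_span_singleton (Set.range_nonempty _) h
    exact M.free_of_minorsIdeal_eq_span_singleton b
      (M.minorsIdeal_ne_bot_of_det_ne_zero b hv₀) v hv

/-- Lemma 2.4. Let `R` be a Noetherian local domain, `G` a
free `R`-module of finite rank (with basis `b` indexed by the finite type `ι`),
and `M ⊆ G` a submodule of rank equal to `rk G` (i.e. `M` generates `G ⊗ K`
over the fraction field `K`; equivalently, every element of `G` has a nonzero
multiple in `M`).  Then `M` is free iff the ideal `I_G(M)` of maximal minors —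
the ideal generated by the determinants of all square matrices of coordinates
of elements of `M` in the basis `b` — is principal. -/
theorem stmt_0
    {R : Type*} [CommRing R] [IsDomain R] [IsNoetherianRing R] [IsLocalRing R]
    {G : Type*} [AddCommGroup G] [Module R G]
    {ι : Type*} [Fintype ι] [DecidableEq ι] (b : Module.Basis ι R G)
    (M : Submodule R G)
    (hfull : ∀ g : G, ∃ r : R, r ≠ 0 ∧ r • g ∈ M) :
    Module.Free R ↥M ↔
      (Ideal.span {d : R | ∃ v : ι → ↥M,
        d = Matrix.det (Matrix.of fun i j => b.repr (v j : G) i)}).IsPrincipal :=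
  stmt_0_general b M hfull
end

section
/- There exists a free submodule C ⊆ M of rank equal to rk(M) such that CV ∩ F = MV ∩ F (as submodules of F), and moreover ord_R(det(C)) = ord_R(M), where det(C) is the determinant of a matrix expressing a basis of C in a basis of F. -/
open IsLocalRing Pointwise

set_option synthInstance.maxHeartbeats 1000000
set_option maxHeartbeats 4000000

/-! Preliminary definitions: lengths, orders, order valuation rings, spans over
intermediate rings, ideals of minors, quadratic transforms, Buchsbaum-Rim
multiplicity. -/

/-- The length of a module, as the Krull dimension of its lattice of submodules
(`⊤` if the module is not of finite length). -/
noncomputable def modLength (R M : Type*) [Ring R] [AddCommGroup M] [Module R M] : ℕ∞ :=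
  (Order.krullDim (Submodule R M)).unbotD 0

/-- The order of an ideal `I` with respect to the filtration by powers of `mA`:
the largest `n` with `I ≤ mA ^ n`. -/
noncomputable def ordWrt {A : Type*} [CommRing A] (mA : Ideal A) (I : Ideal A) : ℕ∞ :=
  ⨆ n ∈ {n : ℕ | I ≤ mA ^ n}, (n : ℕ∞)

/-- The order of an element with respect to the filtration by powers of `mA`. -/
noncomputable def ordElemWrt {A : Type*} [CommRing A] (mA : Ideal A) (a : A) : ℕ∞ :=
  ordWrt mA (Ideal.span {a})

section OrderVal

variable (R K : Type*) [CommRing R] [Field K] [Algebra R K]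

/-- `V` is the valuation ring in `K` of the `m`-adic order valuation of the local
ring `R`: it consists of the fractions `a/b` with `ord_R a ≥ ord_R b`. -/
def IsOrderValRing [IsLocalRing R] (V : Subalgebra R K) : Prop :=
  ∀ k : K, k ∈ V ↔ ∃ a b : R, b ≠ 0 ∧ k * algebraMap R K b = algebraMap R K a ∧
    ordElemWrt (maximalIdeal R) b ≤ ordElemWrt (maximalIdeal R) a

/-- `V` is the order valuation ring (inside `K`) of the local subring `A ⊆ K`,
whose maximal ideal (= set of nonunits) is `mA`. -/
def IsOrderValRingOf (A V : Subalgebra R K) : Prop :=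
  ∃ mA : Ideal ↥A, (∀ a : ↥A, a ∈ mA ↔ ¬IsUnit a) ∧
    ∀ k : K, k ∈ V ↔ ∃ a b : ↥A, b ≠ 0 ∧ k * (b : K) = (a : K) ∧
      ordElemWrt mA b ≤ ordElemWrt mA a

/-- `V'` is a discrete valuation ring (a local principal ideal domain that is
not a field; being a subring of the field `K` it is automatically a domain). -/
def IsDVRSubalg (V' : Subalgebra R K) : Prop :=
  IsPrincipalIdealRing ↥V' ∧ IsLocalRing ↥V' ∧ ¬IsField ↥V'

/-- The subalgebra `S = R[m/x]` of `K`: its elements are the fractions `a/xⁿ`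
with `a ∈ mⁿ`. -/
def IsMxAlgebra [IsLocalRing R] (x : R) (S : Subalgebra R K) : Prop :=
  (S : Set K) = {k : K | ∃ (n : ℕ) (a : R), a ∈ maximalIdeal R ^ n ∧
    k * algebraMap R K x ^ n = algebraMap R K a}

/-- `B` is a first quadratic transform of the local subring `A` of `K`:
`B` is the localization of `S = A[m_A/x]` (for some minimal generator `x` of the
maximal ideal `m_A` of `A`) at a maximal ideal `Q` containing `m_A·S`, all
realized as subrings of `K`. -/
def IsFQT (A B : Subalgebra R K) : Prop :=
  ∃ mA : Ideal ↥A, (∀ a : ↥A, a ∈ mA ↔ ¬IsUnit a) ∧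
  ∃ x : ↥A, x ∈ mA ∧ x ∉ mA ^ 2 ∧
  ∃ S : Subalgebra R K,
    (S : Set K) = {k : K | ∃ (n : ℕ) (a : ↥A), a ∈ mA ^ n ∧ k * (x : K) ^ n = (a : K)} ∧
  ∃ Q : Ideal ↥S, Q.IsMaximal ∧
    (∀ (s : ↥S) (a : ↥A), a ∈ mA → (s : K) = (a : K) → s ∈ Q) ∧
    (B : Set K) = {k : K | ∃ s t : ↥S, t ∉ Q ∧ k * (t : K) = (s : K)}

/-- `T` is a quadratic transform of `R`: there is a finite chain
`R = T₀ ⊆ T₁ ⊆ ⋯ ⊆ Tₙ = T` of subrings of `K` in which each `T_{i+1}` is a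
first quadratic transform of `T_i`.  (`⊥ : Subalgebra R K` is the image of `R`.) -/
def IsQuadTransform (T : Subalgebra R K) : Prop :=
  ∃ (n : ℕ) (c : ℕ → Subalgebra R K), c 0 = ⊥ ∧ c n = T ∧
    ∀ i < n, IsFQT R K (c i) (c (i + 1))

/-- The residue field extension degree `[T : R] = d`: the residue field of the
local ring `T` (with maximal ideal `mT` = its nonunits) has a basis of `d`
elements over the image of `R`. -/
def IsResidueDegree (T : Subalgebra R K) (d : ℕ) : Prop :=
  ∃ mT : Ideal ↥T, (∀ a : ↥T, a ∈ mT ↔ ¬IsUnit a) ∧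
  ∃ f : Fin d → (↥T ⧸ mT),
    (∀ z : ↥T ⧸ mT, ∃ c : Fin d → R,
      z = ∑ i, Ideal.Quotient.mk mT (algebraMap R ↥T (c i)) * f i) ∧
    (∀ c : Fin d → R, ∑ i, Ideal.Quotient.mk mT (algebraMap R ↥T (c i)) * f i = 0 →
      ∀ i, Ideal.Quotient.mk mT (algebraMap R ↥T (c i)) = 0)

end OrderVal

section Modules

variable (R K : Type*) [CommRing R] [Field K] [Algebra R K]
variable (W : Type*) [AddCommGroup W] [Module K W] [Module R W] [IsScalarTower R K W]

/-- `vSpan V N` is the `V`-submodule `N·V` of the `K`-vector space `W` generated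
by the `R`-submodule `N`, for a subring `V` of `K` containing `R`
(recorded as an `R`-submodule of `W`). -/
def vSpan (V : Subalgebra R K) (N : Submodule R W) : Submodule R W :=
  Submodule.span R {w : W | ∃ v ∈ V, ∃ x ∈ N, w = v • x}

/-- `λ_R(P/N)`, the length over `R` of the subquotient `P/N`. -/
noncomputable def lamSub (N P : Submodule R W) : ℕ∞ :=
  modLength R (↥P ⧸ Submodule.comap P.subtype N)

/-- `λ_T(P/N)`, the length of the subquotient `P/N` of `W` as a module over the
subring `T` of `K` (the `T`-module structure on `W` comes from the `K`-vector
space structure; `N` and `P` are replaced by the `T`-submodules they generate). -/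
noncomputable def lamOver (T : Subalgebra R K) (N P : Submodule R W) : ℕ∞ :=
  letI : Module ↥T W := Module.compHom W (algebraMap ↥T K)
  modLength ↥T
    (↥(Submodule.span ↥T (P : Set W)) ⧸
      Submodule.comap (Submodule.span ↥T (P : Set W)).subtype (Submodule.span ↥T (N : Set W)))

/-- `f` is a (finite) basis of the `R`-submodule `N` of `W` as a module over the
subring `T` of `K`. -/
def IsBasisOver (T : Subalgebra R K) (N : Submodule R W) {n : ℕ} (f : Fin n → W) : Prop :=
  (∀ i, f i ∈ N) ∧
  (∀ w ∈ N, ∃ t : Fin n → K, (∀ i, t i ∈ T) ∧ w = ∑ i, t i • f i) ∧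
  (∀ t : Fin n → K, (∀ i, t i ∈ T) → ∑ i, t i • f i = 0 → ∀ i, t i = 0)

/-- The (`R`-sub)module `N` of `W` is free as a module over the subring `T ⊆ K`. -/
def IsFreeOver (T : Subalgebra R K) (N : Submodule R W) : Prop :=
  ∃ (n : ℕ) (f : Fin n → W), IsBasisOver R K W T N f

/-- `G` is (the image in `W` of) the double dual over `T` of the `T`-module `NT`
generated by `N`: it is a free `T`-module containing `NT` with quotient of
finite length over `T`.  These properties characterise the double dual. -/
def IsDoubleDualOver (T : Subalgebra R K) (N G : Submodule R W) : Prop :=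
  vSpan R K W T N ≤ G ∧ (∀ t ∈ T, ∀ w ∈ G, t • w ∈ G) ∧ IsFreeOver R K W T G ∧
    lamOver R K W T (vSpan R K W T N) G ≠ ⊤

/-- The ideal of minors `I_F(M)` of a submodule `M` of a free module `F` with
basis `b`: the ideal generated by the determinants of all square matrices of
coordinates of elements of `M`. -/
noncomputable def minorsIdeal {ι : Type*} [Fintype ι] [DecidableEq ι]
    {M F : Submodule R W} (hMF : M ≤ F) (b : Module.Basis ι R ↥F) : Ideal R :=
  Ideal.span {d : R | ∃ v : ι → ↥M,
    d = Matrix.det (Matrix.of fun i j => b.repr ⟨(v j : W), hMF (v j).2⟩ i)}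

/-- The determinant of a matrix expressing the basis `c` of `C` in the basis `b`
of `F`, for free submodules `C ≤ F` of equal rank. -/
noncomputable def detIn {ι : Type*} [Fintype ι] [DecidableEq ι]
    {C F : Submodule R W} (hCF : C ≤ F) (c : Module.Basis ι R ↥C) (b : Module.Basis ι R ↥F) : R :=
  Matrix.det (Matrix.of fun i j => b.repr ⟨((c j : ↥C) : W), hCF (c j).2⟩ i)

/-- The colon submodule `(N :_P I) = {w ∈ P : I·w ⊆ N}`. -/
def colonIn (N P : Submodule R W) (I : Ideal R) : Submodule R W where
  carrier := {w : W | w ∈ P ∧ ∀ a ∈ I, a • w ∈ N}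
  add_mem' := by
    rintro w w' ⟨hwP, hw⟩ ⟨hw'P, hw'⟩
    exact ⟨P.add_mem hwP hw'P, fun a ha => by
      rw [smul_add]; exact N.add_mem (hw a ha) (hw' a ha)⟩
  zero_mem' := ⟨P.zero_mem, fun a _ => by rw [smul_zero]; exact N.zero_mem⟩
  smul_mem' := by
    rintro r w ⟨hwP, hw⟩
    exact ⟨P.smul_mem r hwP, fun a ha => by
      rw [smul_comm]; exact N.smul_mem r (hw a ha)⟩

end Modules

section BR

variable (A : Type*) [CommRing A] (ι : Type*) [Fintype ι]

/-- The `n`-th ingredient of the Buchsbaum-Rim function: `λ_A(Symₙ(F)/Sₙ(M))`,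
where `F` is free with basis `ι` (so that `Sym(F)` is the polynomial ring
`A[Xᵢ]`, `Symₙ(F)` its homogeneous component of degree `n`), `M` is the
submodule of `F` whose elements have coordinate vectors `L`, and `Sₙ(M)` is the
`A`-span of all products of `n` linear forms with coefficient vectors in `L`
(i.e. the image of `Symₙ(M)` in `Symₙ(F)`). -/
noncomputable def brLength (L : Set (ι → A)) (n : ℕ) : ℕ∞ :=
  modLength A
    (↥(MvPolynomial.homogeneousSubmodule ι A n) ⧸
      Submodule.comap (MvPolynomial.homogeneousSubmodule ι A n).subtype
        (Submodule.span A {p : MvPolynomial ι A | ∃ v : Fin n → (ι → A), (∀ j, v j ∈ L) ∧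
          p = ∏ j, ∑ i, MvPolynomial.C (v j i) * MvPolynomial.X i}))

/-- `e` is the Buchsbaum-Rim multiplicity of `F/M`, where `F` is free with basis
`ι` and `M` is the submodule whose elements have coordinate vectors `L`: if
`M = F` then `e = 0`; otherwise `λ_A(Symₙ(F)/Sₙ(M))` is eventually given by a
polynomial of degree `rk(F) + 1` and `e` is `(rk F + 1)!` times its leading
coefficient. -/
def IsBRMult (L : Set (ι → A)) (e : ℕ) : Prop :=
  (Submodule.span A L = ⊤ ∧ e = 0) ∨
  (Submodule.span A L ≠ ⊤ ∧ ∃ p : Polynomial ℚ,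
    p.degree = (Fintype.card ι + 1 : ℕ) ∧
    (∃ N : ℕ, ∀ n ≥ N, ∃ k : ℕ,
      brLength A ι L n = (k : ℕ∞) ∧ (k : ℚ) = p.eval (n : ℚ)) ∧
    (e : ℚ) = (Nat.factorial (Fintype.card ι + 1)) * p.leadingCoeff)

end BR

/-! Choose `u : ι → M` whose determinant `Δ = det_F(u)` is nonzero of minimal order among all
determinants of families in `M`. Every generator of the ideal of minors then has order `≥ ord Δ`,
so `ord_R(M) = ord Δ`; and `u` is linearly independent, spanning a free `C ⊆ M`. By Cramer's rule
every `w ∈ M` equals `∑ⱼ (Δⱼ / Δ) uⱼ`, where `Δⱼ` is the determinant of `u` with `uⱼ` replaced by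
`w`; minimality gives `ord Δⱼ ≥ ord Δ`, i.e. `Δⱼ / Δ ∈ V`, so `MV = CV`. -/

section Order

variable {A : Type*} [CommRing A] (mA : Ideal A)

theorem natCast_le_ordWrt_iff {I : Ideal A} {n : ℕ} : (n : ℕ∞) ≤ ordWrt mA I ↔ I ≤ mA ^ n := by
  refine ⟨fun h => ?_, fun h => le_iSup₂ (f := fun (k : ℕ) _ => (k : ℕ∞)) n h⟩
  by_contra hIn
  have hn : n ≠ 0 := by rintro rfl; simp at hIn
  have : ordWrt mA I ≤ ((n - 1 : ℕ) : ℕ∞) := iSup₂_le fun k hk => by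
    have : k < n := lt_of_not_ge fun hnk => hIn (hk.trans (Ideal.pow_le_pow_right hnk))
    exact_mod_cast Nat.le_sub_one_of_lt this
  have : n ≤ n - 1 := by exact_mod_cast h.trans this
  omega

theorem natCast_le_ordElemWrt_iff {a : A} {n : ℕ} :
    (n : ℕ∞) ≤ ordElemWrt mA a ↔ a ∈ mA ^ n := by
  rw [ordElemWrt, natCast_le_ordWrt_iff, Ideal.span_singleton_le_iff_mem]

theorem ordElemWrt_zero : ordElemWrt mA 0 = ⊤ :=
  ENat.eq_top_iff_forall_ge.2 fun _ => (natCast_le_ordElemWrt_iff mA).2 (zero_mem _)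

theorem ordWrt_antitone : Antitone (ordWrt mA) := fun _ _ hIJ =>
  iSup₂_le fun _ hn => (natCast_le_ordWrt_iff mA).2 (hIJ.trans hn)

theorem le_ordWrt_span_iff {S : Set A} {N : ℕ∞} :
    N ≤ ordWrt mA (Ideal.span S) ↔ ∀ a ∈ S, N ≤ ordElemWrt mA a := by
  refine ⟨fun h a ha => h.trans (ordWrt_antitone mA ?_), fun h => ?_⟩
  · exact Ideal.span_singleton_le_iff_mem _ |>.2 (Ideal.subset_span ha)
  refine ENat.forall_natCast_le_iff_le.1 fun n hn => (natCast_le_ordWrt_iff mA).2 ?_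
  exact Ideal.span_le.2 fun a ha => (natCast_le_ordElemWrt_iff mA).1 (hn.trans (h a ha))

theorem ordWrt_span_range_eq_of_forall_le {α : Type*} {f : α → A} {a : α}
    (hmin : ∀ b, ordElemWrt mA (f a) ≤ ordElemWrt mA (f b)) :
    ordWrt mA (Ideal.span (Set.range f)) = ordElemWrt mA (f a) :=
  le_antisymm ((le_ordWrt_span_iff mA).1 le_rfl _ (Set.mem_range_self a))
    ((le_ordWrt_span_iff mA).2 (Set.forall_mem_range.2 hmin))

theorem exists_ordElemWrt_le_of_ne_zero {α : Type*} (f : α → A) (hf : ∃ a, f a ≠ 0) :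
    ∃ a, f a ≠ 0 ∧ ∀ b, ordElemWrt mA (f a) ≤ ordElemWrt mA (f b) := by
  obtain ⟨a, ha, hmin⟩ := (InvImage.wf (fun a => ordElemWrt mA (f a)) wellFounded_lt).has_min
    {a | f a ≠ 0} hf
  refine ⟨a, ha, fun b => ?_⟩
  by_cases hb : f b = 0
  · simp [hb, ordElemWrt_zero]
  · exact not_lt.1 (hmin b hb)

end Order

namespace Module.Basis

variable {R M ι : Type*} [CommRing R] [AddCommGroup M] [Module R M] [Fintype ι] [DecidableEq ι]

theorem det_smul_eq_sum_det_update_smul_s1 (e : Basis ι R M) (v : ι → M) (w : M) :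
    e.det v • w = ∑ j, e.det (Function.update v j w) • v j := by
  apply e.equivFun.injective
  ext i
  have := congrFun (Matrix.mulVec_cramer (e.toMatrix v) (e.repr w)) i
  simp only [Matrix.mulVec, dotProduct, Matrix.cramer_apply, ← e.toMatrix_update,
    ← e.det_apply] at this
  simp [this.symm, e.toMatrix_apply, mul_comm]

theorem linearIndependent_iff_det_ne_zero [IsDomain R] (e : Basis ι R M) (v : ι → M) :
    LinearIndependent R v ↔ e.det v ≠ 0 := by
  rw [e.det_apply, ← Matrix.nonsingular_iff_det_ne_zero, ← Matrix.linearIndependent_col_iff,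
    ← e.equivFun.toLinearMap.linearIndependent_iff (LinearEquiv.ker _)]
  rfl

end Module.Basis

theorem exists_linearIndependent_subset_of_span_eq_top {K W ι : Type*} [DivisionRing K]
    [AddCommGroup W] [Module K W] (b : Module.Basis ι K W) {s : Set W}
    (hs : Submodule.span K s = ⊤) : ∃ v : ι → W, (∀ i, v i ∈ s) ∧ LinearIndependent K v := by
  obtain ⟨t, hts, hspan, hli⟩ := exists_linearIndependent K s
  let bt : Module.Basis t K W := Module.Basis.mk hli (by rw [Subtype.range_coe, hspan, hs])
  let e : t ≃ ι := bt.indexEquiv b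
  exact ⟨fun i => e.symm i, fun i => hts (e.symm i).2, hli.comp _ e.symm.injective⟩

section Modules

variable {R K W ι : Type*} [CommRing R] [Field K] [Algebra R K]
  [AddCommGroup W] [Module K W] [Module R W] [Fintype ι]

theorem minorsIdeal_eq_span_range_det [DecidableEq ι] {M F : Submodule R W} (hMF : M ≤ F)
    (b : Module.Basis ι R F) :
    minorsIdeal R W hMF b =
      Ideal.span (Set.range fun v : ι → M => b.det (Submodule.inclusion hMF ∘ v)) := by
  simp only [minorsIdeal, b.det_apply, Set.range, eq_comm]
  rfl

theorem detIn_basisSpan [DecidableEq ι] {M F : Submodule R W} (hMF : M ≤ F)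
    (b : Module.Basis ι R F) {u : ι → M} (hu : LinearIndependent R fun i => (u i : W))
    (hCM : Submodule.span R (Set.range fun i => (u i : W)) ≤ M) :
    detIn R W (hCM.trans hMF) (Module.Basis.span hu) b = b.det (Submodule.inclusion hMF ∘ u) := by
  simp only [detIn, b.det_apply, Module.Basis.span_apply]
  rfl

theorem vSpan_mono (V : Subalgebra R K) {N N' : Submodule R W} (h : N ≤ N') :
    vSpan R K W V N ≤ vSpan R K W V N' :=
  Submodule.span_mono fun _ ⟨t, ht, x, hx, hw⟩ => ⟨t, ht, x, h hx, hw⟩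

theorem vSpan_le_vSpan_span_of_forall (V : Subalgebra R K) {N : Submodule R W} (v : ι → W)
    (h : ∀ x ∈ N, ∃ t : ι → K, (∀ j, t j ∈ V) ∧ x = ∑ j, t j • v j) :
    vSpan R K W V N ≤ vSpan R K W V (Submodule.span R (Set.range v)) := by
  refine Submodule.span_le.2 ?_
  rintro _ ⟨s, hs, x, hx, rfl⟩
  obtain ⟨t, ht, rfl⟩ := h x hx
  rw [Finset.smul_sum]
  refine Submodule.sum_mem _ fun j _ => ?_
  rw [smul_smul]
  exact Submodule.subset_span
    ⟨s * t j, V.mul_mem hs (ht j), v j, Submodule.subset_span ⟨j, rfl⟩, rfl⟩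

theorem IsOrderValRing.algebraMap_div_mem [IsLocalRing R] {V : Subalgebra R K}
    (hV : IsOrderValRing R K V) {a b : R} (hb : algebraMap R K b ≠ 0)
    (hab : ordElemWrt (maximalIdeal R) b ≤ ordElemWrt (maximalIdeal R) a) :
    algebraMap R K a / algebraMap R K b ∈ V :=
  (hV _).2 ⟨a, b, fun h => hb (by simp [h]), div_mul_cancel₀ _ hb, hab⟩

theorem Module.Basis.coe_eq_sum_div_det_smul [IsScalarTower R K W] [DecidableEq ι]
    {F : Submodule R W} (e : Module.Basis ι R F) {v : ι → F} (hv : algebraMap R K (e.det v) ≠ 0)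
    (w : F) :
    (w : W) = ∑ j, (algebraMap R K (e.det (Function.update v j w)) / algebraMap R K (e.det v)) •
      (v j : W) := by
  refine smul_right_injective W hv ?_
  simp only [Finset.smul_sum, smul_smul, mul_div_cancel₀ _ hv, algebraMap_smul]
  exact_mod_cast congrArg Subtype.val (e.det_smul_eq_sum_det_update_smul_s1 v w)

theorem exists_det_ne_zero [IsDomain R] [IsFractionRing R K] [IsScalarTower R K W]
    [DecidableEq ι] {M F : Submodule R W} (hMF : M ≤ F) (b : Module.Basis ι R F)
    (hspan : Submodule.span K (M : Set W) = ⊤) :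
    ∃ v : ι → M, b.det (Submodule.inclusion hMF ∘ v) ≠ 0 := by
  have hliK : LinearIndependent K fun i => (b i : W) :=
    (LinearIndependent.iff_fractionRing R K).1 (b.linearIndependent.map' F.subtype F.ker_subtype)
  have hspanR : Submodule.span R (Set.range fun i => (b i : W)) = F := by
    rw [Set.range_comp', ← F.coe_subtype, ← Submodule.map_span, b.span_eq,
      Submodule.map_subtype_top]
  have hspanK : ⊤ ≤ Submodule.span K (Set.range fun i => (b i : W)) := by
    rw [← hspan]
    refine Submodule.span_le.2 fun x hx => ?_
    exact Submodule.span_le_restrictScalars R K _ (hspanR.symm ▸ hMF hx :)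
  obtain ⟨v, hvM, hvli⟩ :=
    exists_linearIndependent_subset_of_span_eq_top (Module.Basis.mk hliK hspanK) hspan
  refine ⟨fun i => ⟨v i, hvM i⟩, (b.linearIndependent_iff_det_ne_zero _).1 ?_⟩
  exact LinearIndependent.of_comp F.subtype ((LinearIndependent.iff_fractionRing R K).2 hvli)

theorem vSpan_span_eq_vSpan_of_det_minimal [IsDomain R] [IsLocalRing R] [IsFractionRing R K]
    [IsScalarTower R K W] [DecidableEq ι] {V : Subalgebra R K} (hV : IsOrderValRing R K V)
    {M F : Submodule R W} (hMF : M ≤ F) (b : Module.Basis ι R F) {u : ι → M}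
    (hu : b.det (Submodule.inclusion hMF ∘ u) ≠ 0)
    (hmin : ∀ u' : ι → M, ordElemWrt (maximalIdeal R) (b.det (Submodule.inclusion hMF ∘ u)) ≤
      ordElemWrt (maximalIdeal R) (b.det (Submodule.inclusion hMF ∘ u'))) :
    vSpan R K W V (Submodule.span R (Set.range fun i => (u i : W))) = vSpan R K W V M := by
  have hu' := (map_ne_zero_iff _ (IsFractionRing.injective R K)).2 hu
  refine le_antisymm (vSpan_mono V (Submodule.span_le.2 (Set.range_subset_iff.2 fun i => (u i).2)))
    (vSpan_le_vSpan_span_of_forall V _ fun x hx => ⟨_, fun j => ?_,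
      b.coe_eq_sum_div_det_smul hu' (Submodule.inclusion hMF ⟨x, hx⟩)⟩)
  refine hV.algebraMap_div_mem hu' ?_
  rw [← Function.comp_update]
  exact hmin _

end Modules

theorem stmt_1_general    {R : Type*} [CommRing R] [IsDomain R] [IsLocalRing R]
    {K : Type*} [Field K] [Algebra R K] [IsFractionRing R K]
    {W : Type*} [AddCommGroup W] [Module K W] [Module R W] [IsScalarTower R K W]
    {M F : Submodule R W} (hMF : M ≤ F)
    {ι : Type*} [Fintype ι] [DecidableEq ι] (bF : Module.Basis ι R ↥F)
    (hspan : Submodule.span K (M : Set W) = ⊤)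
    {V : Subalgebra R K} (hV : IsOrderValRing R K V)
 :
    ∃ C : Submodule R W, ∃ hCM : C ≤ M, ∃ c : Module.Basis ι R ↥C,
      vSpan R K W V C ⊓ F = vSpan R K W V M ⊓ F ∧
      ordElemWrt (maximalIdeal R) (detIn R W (hCM.trans hMF) c bF) =
        ordWrt (maximalIdeal R) (minorsIdeal R W hMF bF) := by
  let minor : (ι → M) → R := fun v => bF.det (Submodule.inclusion hMF ∘ v)
  obtain ⟨u, hu, hmin⟩ := exists_ordElemWrt_le_of_ne_zero (maximalIdeal R) minor
    (exists_det_ne_zero hMF bF hspan)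
  have hli : LinearIndependent R fun i => (u i : W) :=
    ((bF.linearIndependent_iff_det_ne_zero _).2 hu).map' F.subtype F.ker_subtype
  have hCM : Submodule.span R (Set.range fun i => (u i : W)) ≤ M :=
    Submodule.span_le.2 (Set.range_subset_iff.2 fun i => (u i).2)
  refine ⟨_, hCM, Module.Basis.span hli, ?_, ?_⟩
  · rw [vSpan_span_eq_vSpan_of_det_minimal hV hMF bF hu hmin]
  · rw [detIn_basisSpan hMF bF hli hCM, minorsIdeal_eq_span_range_det]
    exact (ordWrt_span_range_eq_of_forall_le (maximalIdeal R) (f := minor) hmin).symm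

/-- Lemma 3.1. There is a free submodule `C ⊆ M` of rank `rk M`
with `CV ∩ F = MV ∩ F`, and `ord_R(det C) = ord_R(M)`. -/
theorem stmt_1    {R : Type*} [CommRing R] [IsDomain R] [IsNoetherianRing R] [IsLocalRing R]
    (hdim : ringKrullDim R = 2)
    (hreg : ∃ x y : R, maximalIdeal R = Ideal.span {x, y})
    [Infinite (ResidueField R)]
    {K : Type*} [Field K] [Algebra R K] [IsFractionRing R K]
    {W : Type*} [AddCommGroup W] [Module K W] [Module R W] [IsScalarTower R K W]
    {M F : Submodule R W} (hMF : M ≤ F) (hfg : M.FG)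
    {ι : Type*} [Fintype ι] [DecidableEq ι] (bF : Module.Basis ι R ↥F)
    (hspan : Submodule.span K (M : Set W) = ⊤)
    (hlen : IsFiniteLength R (↥F ⧸ Submodule.comap F.subtype M))
    {V : Subalgebra R K} (hV : IsOrderValRing R K V)
 :
    ∃ C : Submodule R W, ∃ hCM : C ≤ M, ∃ c : Module.Basis ι R ↥C,
      vSpan R K W V C ⊓ F = vSpan R K W V M ⊓ F ∧
      ordElemWrt (maximalIdeal R) (detIn R W (hCM.trans hMF) c bF) =
        ordWrt (maximalIdeal R) (minorsIdeal R W hMF bF) :=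
  stmt_1_general hMF bF hspan hV
end
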